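/- For f ∈ L¹(ℝᵐ) and ρ ∈ L²(ℝ), the ridgelet transform R[f](a,b) = ∫_{ℝᵐ} f(x) conj(ρ(a·x − b)) dx admits the Fourier form R[f](a,b) = (1/(2π)) ∫_ℝ f̂(ωa) conj(ρ̂(ω)) e^{iωb} dω, where f̂ denotes the m-dimensional Fourier transform of f and ρ̂ the 1-dimensional Fourier transform of ρ. -/

import Mathlib

open MeasureTheory Complex
open scoped RealInnerProductSpace

/-- **Fourier form of the ridgelet transform.**
For `f ∈ L¹(ℝᵐ)` and `ρ` with Fourier inversion `ρ z = (1/(2π)) ∫ ρ̂(ω) e^{iωz} dω`,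
the ridgelet transform `R[f](a,b) = ∫ f(x) conj(ρ(a·x − b)) dx` equals
`(1/(2π)) ∫ f̂(ωa) conj(ρ̂(ω)) e^{iωb} dω`, where `f̂(ξ) = ∫ f(x) e^{-i ξ·x} dx`. -/
theorem ridgelet_fourier_form (m : ℕ) (f : EuclideanSpace ℝ (Fin m) → ℂ)
    (ρ ρhat : ℝ → ℂ) (fhat : EuclideanSpace ℝ (Fin m) → ℂ)
    (hf : Integrable f) (hρ : MemLp ρ 2 volume)
    (hρhat : Integrable ρhat)
    (hinv : ∀ z : ℝ, ρ z = (1 / (2 * Real.pi) : ℝ) •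
      ∫ ω : ℝ, ρhat ω * Complex.exp (Complex.I * ω * z))
    (hfhat : ∀ ξ : EuclideanSpace ℝ (Fin m),
      fhat ξ = ∫ x, f x * Complex.exp (-Complex.I * (⟪ξ, x⟫ : ℂ)))
    (a : EuclideanSpace ℝ (Fin m)) (b : ℝ) :
    (∫ x, f x * (starRingEnd ℂ) (ρ (⟪a, x⟫ - b)))
      = (1 / (2 * Real.pi) : ℝ) • ∫ ω : ℝ,
          fhat (ω • a) * (starRingEnd ℂ) (ρhat ω) * Complex.exp (Complex.I * ω * b) := by
  have hρc : Integrable (fun ω => (starRingEnd ℂ) (ρhat ω)) volume := by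
    refine ⟨Complex.continuous_conj.comp_aestronglyMeasurable hρhat.1, ?_⟩
    simpa [HasFiniteIntegral] using hρhat.2
  -- conjugated inversion formula
  have hconj : ∀ z : ℝ, (starRingEnd ℂ) (ρ z) =
      (1 / (2 * Real.pi) : ℝ) • ∫ ω : ℝ,
        (starRingEnd ℂ) (ρhat ω) * Complex.exp (-(Complex.I * ω * z)) := by
    intro z
    rw [hinv z, starRingEnd_apply, star_smul, star_trivial, ← starRingEnd_apply,
      ← integral_conj]
    congr 1
    refine integral_congr_ae (Filter.Eventually.of_forall fun ω => ?_)
    simp only [map_mul, ← Complex.exp_conj]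
    simp [Complex.conj_I, Complex.conj_ofReal, mul_comm, mul_left_comm]
  set F : EuclideanSpace ℝ (Fin m) → ℝ → ℂ :=
    fun x ω => f x * ((starRingEnd ℂ) (ρhat ω)
      * Complex.exp (-(Complex.I * ω * (⟪a, x⟫ - b)))) with hF
  have hFint : Integrable (Function.uncurry F) (volume.prod volume) := by
    have h1 : Integrable (fun p : EuclideanSpace ℝ (Fin m) × ℝ =>
        f p.1 * (starRingEnd ℂ) (ρhat p.2)) (volume.prod volume) :=
      hf.mul_prod hρc
    have h2 : Integrable (fun p : EuclideanSpace ℝ (Fin m) × ℝ =>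
        Complex.exp (-(Complex.I * p.2 * (⟪a, p.1⟫ - b)))
          * (f p.1 * (starRingEnd ℂ) (ρhat p.2))) (volume.prod volume) := by
      refine h1.bdd_mul (c := 1) ?_ (Filter.Eventually.of_forall fun p => ?_)
      · apply Continuous.aestronglyMeasurable
        exact Complex.continuous_exp.comp
          (((continuous_const.mul (Complex.continuous_ofReal.comp continuous_snd)).mul
            ((Complex.continuous_ofReal.comp
              (continuous_const.inner continuous_fst)).sub continuous_const)).neg)
      · rw [Complex.norm_exp]
        simp [Complex.mul_re, Complex.mul_im]
    refine h2.congr (Filter.Eventually.of_forall fun p => ?_)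
    simp only [Function.uncurry, hF]
    ring
  calc (∫ x, f x * (starRingEnd ℂ) (ρ (⟪a, x⟫ - b)))
      = ∫ x, (1 / (2 * Real.pi) : ℝ) • ∫ ω : ℝ, F x ω := by
        refine integral_congr_ae (Filter.Eventually.of_forall fun x => ?_)
        show f x * (starRingEnd ℂ) (ρ (⟪a, x⟫ - b)) = (1 / (2 * Real.pi) : ℝ) • ∫ ω : ℝ, F x ω
        rw [hconj, mul_smul_comm, ← integral_const_mul]
        simp only [hF]
        norm_cast
    _ = (1 / (2 * Real.pi) : ℝ) • ∫ x, ∫ ω : ℝ, F x ω := by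
        rw [integral_smul]
    _ = (1 / (2 * Real.pi) : ℝ) • ∫ ω : ℝ, ∫ x, F x ω := by
        rw [integral_integral_swap hFint]
    _ = (1 / (2 * Real.pi) : ℝ) • ∫ ω : ℝ,
          fhat (ω • a) * (starRingEnd ℂ) (ρhat ω) * Complex.exp (Complex.I * ω * b) := by
        congr 1
        refine integral_congr_ae (Filter.Eventually.of_forall fun ω => ?_)
        calc (∫ x, F x ω)
            = ∫ x, ((starRingEnd ℂ) (ρhat ω) * Complex.exp (Complex.I * ω * b))
                * (f x * Complex.exp (-Complex.I * ((⟪(ω : ℝ) • a, x⟫ : ℝ) : ℂ))) := by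
              refine integral_congr_ae (Filter.Eventually.of_forall fun x => ?_)
              simp only [hF, real_inner_smul_left]
              rw [show (-(Complex.I * ω * ((⟪a, x⟫ : ℂ) - b)))
                  = (Complex.I * ω * b) + (-Complex.I * ((ω * ⟪a, x⟫ : ℝ) : ℂ)) by
                push_cast; ring, Complex.exp_add]
              ring
          _ = fhat (ω • a) * (starRingEnd ℂ) (ρhat ω) * Complex.exp (Complex.I * ω * b) := by
              rw [integral_const_mul, ← hfhat]
              ring
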